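/- For n > 3ℓ, every edge-coloring of K_n without a rainbow triangle contains a monochromatic star K_{1,ℓ}; hence S(n; K_{1,ℓ}, K_3) = ∅ for n ≥ 3ℓ+1. -/

import Mathlib

open SimpleGraph Finset

universe u v

variable {α : Type u} {β : Type v}

/-- The set of colors used on (non-loop) edges of `K_n` by an edge-coloring `c`. -/
def edgeColors {n : ℕ} (c : Sym2 (Fin n) → ℕ) : Finset ℕ :=
  (Finset.univ.filter fun e : Sym2 (Fin n) => ¬ e.IsDiag).image c

/-- `c` contains a monochromatic copy of `G`. -/
def HasMonoCopy {n : ℕ} (c : Sym2 (Fin n) → ℕ) (G : SimpleGraph α) : Prop :=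
  ∃ f : α ↪ Fin n, ∃ k : ℕ, ∀ u v : α, G.Adj u v → c s(f u, f v) = k

/-- `c` contains a rainbow (totally multicolored) copy of `H`. -/
def HasRainbowCopy {n : ℕ} (c : Sym2 (Fin n) → ℕ) (H : SimpleGraph β) : Prop :=
  ∃ f : β ↪ Fin n, ∀ u v u' v' : β, H.Adj u v → H.Adj u' v' →
    c s(f u, f v) = c s(f u', f v') → s(u, v) = s(u', v')

/-- A `(G,H)`-good coloring: no monochromatic `G` and no rainbow `H`. -/
def GoodColoring {n : ℕ} (c : Sym2 (Fin n) → ℕ) (G : SimpleGraph α) (H : SimpleGraph β) : Prop :=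
  ¬ HasMonoCopy c G ∧ ¬ HasRainbowCopy c H

/-- The mixed-Ramsey mixedSpectrum `S(n; G, H)`. -/
def mixedSpectrum (n : ℕ) (G : SimpleGraph α) (H : SimpleGraph β) : Set ℕ :=
  {k | ∃ c : Sym2 (Fin n) → ℕ, GoodColoring c G H ∧ (edgeColors c).card = k}

/-- `G` is a star: all edges share a common vertex. -/
def IsStar (G : SimpleGraph α) : Prop :=
  ∃ v : α, ∀ u w : α, G.Adj u w → u = v ∨ w = v

/-- `K_3 + e`: a triangle `0,1,2` with a pendant edge `0-3`. -/
def K3e : SimpleGraph (Fin 4) := fromEdgeSet {s(0,1), s(0,2), s(1,2), s(0,3)}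

/-- The 4-cycle `C_4`. -/
def C4g : SimpleGraph (Fin 4) := fromEdgeSet {s(0,1), s(1,2), s(2,3), s(3,0)}

/-- The matching `ℓK_2`. -/
def matchingGraph (ℓ : ℕ) : SimpleGraph (Fin ℓ × Fin 2) := fromRel (fun a b => a.1 = b.1)

/-- The star `K_{1,ℓ}`. -/
def starGraphK (ℓ : ℕ) : SimpleGraph (Fin (ℓ+1)) := fromRel (fun a _ => a = 0)

/-- The cycle `C_m` on `ZMod m`. -/
def cycGraph (m : ℕ) : SimpleGraph (ZMod m) := fromRel (fun a b => a = b + 1)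

/-!
Fix a vertex `v` and sort the other vertices by the color of their edge to `v`. If every vertex
sees every color at most `d` times, each class has at most `d` vertices, so each `x ≠ v` has at
least `n - 1 - d` partners `y` of a different `v`-color. Since the triangle `vxy` is not rainbow,
`xy` then carries the color of `vx` or of `vy`; charging the edge to that endpoint, each vertex is
charged at most `d` times. Double counting gives `(n - 1)(n - 1 - d) ≤ 2(n - 1)d`, i.e.
`n ≤ 3d + 1`, which for `d = ℓ - 1` contradicts `n > 3ℓ`.
-/

theorem Finset.sum_card_filter_or_swap_le {ι : Type*} [DecidableEq ι] (s : Finset ι)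
    (r : ι → ι → Prop) [DecidableRel r] :
    ∑ x ∈ s, #{y ∈ s | r x y ∨ r y x} ≤ 2 * ∑ x ∈ s, #{y ∈ s | r x y} := by
  have hswap : ∑ x ∈ s, #{y ∈ s | r y x} = ∑ x ∈ s, #{y ∈ s | r x y} :=
    sum_card_bipartiteAbove_eq_sum_card_bipartiteBelow (r := fun y x => r x y)
  calc ∑ x ∈ s, #{y ∈ s | r x y ∨ r y x}
      ≤ ∑ x ∈ s, (#{y ∈ s | r x y} + #{y ∈ s | r y x}) :=
        sum_le_sum fun x _ => by rw [filter_or]; exact card_union_le _ _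
    _ = 2 * ∑ x ∈ s, #{y ∈ s | r x y} := by rw [sum_add_distrib, hswap, two_mul]

section GallaiColoring

variable {V κ : Type*} {c : Sym2 V → κ}

def IsGallaiColoring (c : Sym2 V → κ) : Prop :=
  ∀ ⦃a b d : V⦄, a ≠ b → a ≠ d → b ≠ d →
    c s(a, b) = c s(a, d) ∨ c s(a, b) = c s(b, d) ∨ c s(a, d) = c s(b, d)

theorem IsGallaiColoring.color_eq_or_color_eq (hc : IsGallaiColoring c) {v x y : V}
    (hx : x ≠ v) (hy : y ≠ v) (hxy : c s(v, y) ≠ c s(v, x)) :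
    c s(x, y) = c s(v, x) ∨ c s(x, y) = c s(v, y) := by
  have hne : x ≠ y := by rintro rfl; exact hxy rfl
  rcases hc hx.symm hy.symm hne with h | h | h
  · exact absurd h.symm hxy
  · exact Or.inl h.symm
  · exact Or.inr h.symm

variable [Fintype V] [DecidableEq V] [DecidableEq κ]

def colorNeighborFinset (c : Sym2 V → κ) (x : V) (k : κ) : Finset V :=
  {y | y ≠ x ∧ c s(x, y) = k}

theorem card_erase_le_card_filter_color_ne_add {d : ℕ}
    (hd : ∀ x k, #(colorNeighborFinset c x k) ≤ d) (v x : V) :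
    #(univ.erase v) ≤ #{y ∈ univ.erase v | c s(v, y) ≠ c s(v, x)} + d := by
  have hsame :
      {y ∈ univ.erase v | ¬c s(v, y) ≠ c s(v, x)} ⊆ colorNeighborFinset c v (c s(v, x)) := by
    intro y hy
    simp only [mem_filter, mem_erase, not_not] at hy
    simpa [colorNeighborFinset] using hy
  rw [← card_filter_add_card_filter_not (fun y => c s(v, y) ≠ c s(v, x))]
  exact Nat.add_le_add_left ((card_le_card hsame).trans (hd _ _)) _

theorem IsGallaiColoring.card_le {d : ℕ} (hc : IsGallaiColoring c)
    (hd : ∀ x k, #(colorNeighborFinset c x k) ≤ d) : Fintype.card V ≤ 3 * d + 1 := by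
  rcases isEmpty_or_nonempty V with _ | ⟨⟨v⟩⟩
  · simp
  set W := univ.erase v
  let r : V → V → Prop := fun x y => c s(v, y) ≠ c s(v, x) ∧ c s(x, y) = c s(v, x)
  have hsplit (x : V) (hx : x ∈ W) :
      {y ∈ W | c s(v, y) ≠ c s(v, x)} ⊆ {y ∈ W | r x y ∨ r y x} := by
    intro y hy
    simp only [mem_filter] at hy ⊢
    refine ⟨hy.1, ?_⟩
    rcases hc.color_eq_or_color_eq (ne_of_mem_erase hx) (ne_of_mem_erase hy.1) hy.2 with h | h
    · exact Or.inl ⟨hy.2, h⟩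
    · exact Or.inr ⟨Ne.symm hy.2, by rwa [Sym2.eq_swap]⟩
  have hr (x : V) : #{y ∈ W | r x y} ≤ d := by
    refine (card_le_card fun y hy => ?_).trans (hd x (c s(v, x)))
    simp only [mem_filter, r] at hy
    simp only [colorNeighborFinset, mem_filter, mem_univ, true_and]
    exact ⟨fun h => hy.2.1 (h ▸ rfl), hy.2.2⟩
  have hcount : #W * #W ≤ #W * (3 * d) :=
    calc #W * #W ≤ ∑ x ∈ W, (#{y ∈ W | c s(v, y) ≠ c s(v, x)} + d) := by
          rw [← smul_eq_mul, ← sum_const]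
          exact sum_le_sum fun x _ => card_erase_le_card_filter_color_ne_add hd v x
      _ ≤ ∑ x ∈ W, #{y ∈ W | r x y ∨ r y x} + #W * d := by
          rw [sum_add_distrib, sum_const, smul_eq_mul]
          exact Nat.add_le_add_right (sum_le_sum fun x hx => card_le_card (hsplit x hx)) _
      _ ≤ 2 * ∑ x ∈ W, #{y ∈ W | r x y} + #W * d :=
          Nat.add_le_add_right (sum_card_filter_or_swap_le W r) _
      _ ≤ 2 * (#W * d) + #W * d := by
          gcongr
          simpa using sum_le_sum fun x (_ : x ∈ W) => hr x
      _ = #W * (3 * d) := by ring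
  have hW : #W + 1 = Fintype.card V := card_erase_add_one (mem_univ v)
  rcases Nat.eq_zero_or_pos #W with h0 | hpos
  · omega
  · have := Nat.le_of_mul_le_mul_left hcount hpos
    omega

end GallaiColoring

theorem sym2_fin_three_eq_of_ne {u v : Fin 3} (h : u ≠ v) :
    s(u, v) = s(0, 1) ∨ s(u, v) = s(0, 2) ∨ s(u, v) = s(1, 2) := by
  revert u v; decide

theorem isGallaiColoring_of_not_hasRainbowCopy {n : ℕ} {c : Sym2 (Fin n) → ℕ}
    (hc : ¬HasRainbowCopy c (completeGraph (Fin 3))) : IsGallaiColoring c := by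
  intro a b d hab had hbd
  by_contra! hcol
  obtain ⟨h₁, h₂, h₃⟩ := hcol
  let f : Fin 3 ↪ Fin n := ⟨![a, b, d], fun i j hij => by fin_cases i <;> fin_cases j <;> simp_all⟩
  have hf₀ : f 0 = a := rfl
  have hf₁ : f 1 = b := rfl
  have hf₂ : f 2 = d := rfl
  refine hc ⟨f, fun u v u' v' huv hu'v' he => ?_⟩
  rw [← Sym2.map_mk, ← Sym2.map_mk] at he
  rcases sym2_fin_three_eq_of_ne huv with h | h | h <;>
    rcases sym2_fin_three_eq_of_ne hu'v' with h' | h' | h' <;>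
    rw [h, h'] at he ⊢ <;> simp only [Sym2.map_mk, hf₀, hf₁, hf₂] at he <;> omega

theorem hasMonoCopy_starGraphK_of_le_card {n ℓ : ℕ} {c : Sym2 (Fin n) → ℕ} {x : Fin n} {k : ℕ}
    (hℓ : ℓ ≤ #(colorNeighborFinset c x k)) : HasMonoCopy c (starGraphK ℓ) := by
  obtain ⟨S, hS, hScard⟩ := exists_subset_card_eq hℓ
  have hmem : ∀ y ∈ S, y ≠ x ∧ c s(x, y) = k := fun y hy => by
    simpa [colorNeighborFinset] using hS hy
  let g : Fin ℓ ↪ Fin n := (S.orderEmbOfFin hScard).toEmbedding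
  have hg (i : Fin ℓ) : g i ≠ x ∧ c s(x, g i) = k := hmem _ (S.orderEmbOfFin_mem hScard i)
  refine ⟨⟨Fin.cons x g, Fin.cons_injective_iff.mpr ⟨fun ⟨i, hi⟩ => (hg i).1 hi, g.injective⟩⟩,
    k, fun a b hab => ?_⟩
  simp only [starGraphK, fromRel_adj] at hab
  obtain ⟨hne, rfl | rfl⟩ := hab
  · obtain ⟨j, rfl⟩ := Fin.exists_succ_eq.mpr hne.symm
    simpa using (hg j).2
  · obtain ⟨j, rfl⟩ := Fin.exists_succ_eq.mpr hne
    simpa [Sym2.eq_swap] using (hg j).2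

theorem hasMonoCopy_starGraphK_of_not_hasRainbowCopy {n ℓ : ℕ} (h : 3 * ℓ < n)
    {c : Sym2 (Fin n) → ℕ} (hc : ¬HasRainbowCopy c (completeGraph (Fin 3))) :
    HasMonoCopy c (starGraphK ℓ) := by
  by_contra hmono
  have hdeg (x : Fin n) (k : ℕ) : #(colorNeighborFinset c x k) < ℓ := by
    by_contra! hle
    exact hmono (hasMonoCopy_starGraphK_of_le_card hle)
  have hcard := (isGallaiColoring_of_not_hasRainbowCopy hc).card_le (d := ℓ - 1)
    fun x k => Nat.le_sub_one_of_lt (hdeg x k)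
  have hℓ : 0 < ℓ := (Nat.zero_le _).trans_lt (hdeg ⟨0, by omega⟩ 0)
  rw [Fintype.card_fin] at hcard
  omega

/-- For `n > 3ℓ`, every coloring of `K_n` with no rainbow triangle has a
monochromatic `K_{1,ℓ}`; hence `S(n; K_{1,ℓ}, K_3) = ∅`. -/
theorem stmt_13 (n ℓ : ℕ) (h : 3 * ℓ < n) :
    (∀ c : Sym2 (Fin n) → ℕ, ¬ HasRainbowCopy c (completeGraph (Fin 3)) →
      HasMonoCopy c (starGraphK ℓ)) ∧
    mixedSpectrum n (starGraphK ℓ) (completeGraph (Fin 3)) = ∅ := by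
  have hmono (c : Sym2 (Fin n) → ℕ) (hc : ¬HasRainbowCopy c (completeGraph (Fin 3))) :=
    hasMonoCopy_starGraphK_of_not_hasRainbowCopy h hc
  refine ⟨hmono, Set.eq_empty_of_forall_notMem ?_⟩
  rintro k ⟨c, ⟨hnomono, hc⟩, -⟩
  exact hnomono (hmono c hc)
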